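/- Let J ⊂ ℂ[x,y,z] be the ideal generated by the nine fourth powers x⁴, y⁴, z⁴, (x−y)⁴, (x+y)⁴, (x−z)⁴, (x+z)⁴, (y−z)⁴, (y+z)⁴ of the linear forms of the B₃ line arrangement. Then J fails the Strong Lefschetz Property in range 2 at degree 2: for every linear form ℓ = ax + by + cz (a,b,c ∈ ℂ), the multiplication map ·ℓ² : (ℂ[x,y,z]/J)₂ → (ℂ[x,y,z]/J)₄ fails to have maximal rank; concretely, there exists a homogeneous polynomial q of degree 2 with q ∉ J and ℓ²·q ∈ J (both graded pieces have dimension 6, and the map is not injective). -/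
import Mathlib

open MvPolynomial

/-- The ideal generated by the fourth powers of the nine linear forms of the
B₃ line arrangement. -/
noncomputable def B3powersIdeal : Ideal (MvPolynomial (Fin 3) ℂ) :=
  Ideal.span
    {X 0 ^ 4, X 1 ^ 4, X 2 ^ 4,
     (X 0 - X 1) ^ 4, (X 0 + X 1) ^ 4,
     (X 0 - X 2) ^ 4, (X 0 + X 2) ^ 4,
     (X 1 - X 2) ^ 4, (X 1 + X 2) ^ 4}

/-- The substitution `X i ↦ C (X i) * t` into `ℂ[x,y,z][t]`. -/
noncomputable def subT : MvPolynomial (Fin 3) ℂ →ₐ[ℂ] Polynomial (MvPolynomial (Fin 3) ℂ) :=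
  aeval (fun i => Polynomial.C (X i) * Polynomial.X)

lemma subT_mem_span (p : MvPolynomial (Fin 3) ℂ) (hp : p ∈ B3powersIdeal) :
    subT p ∈ Ideal.span {(Polynomial.X : Polynomial (MvPolynomial (Fin 3) ℂ)) ^ 4} := by
  have hmap : Ideal.map (subT.toRingHom) B3powersIdeal ≤
      Ideal.span {(Polynomial.X : Polynomial (MvPolynomial (Fin 3) ℂ)) ^ 4} := by
    rw [B3powersIdeal, Ideal.map_span, Ideal.span_le]
    simp only [Set.image_insert_eq, Set.image_singleton, Set.insert_subset_iff,
      Set.singleton_subset_iff, SetLike.mem_coe, Ideal.mem_span_singleton]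
    refine ⟨?_, ?_, ?_, ?_, ?_, ?_, ?_, ?_, ?_⟩ <;>
      simp only [subT, AlgHom.toRingHom_eq_coe, RingHom.coe_coe, map_pow, map_sub, map_add,
        aeval_X]
    · exact ⟨Polynomial.C (X 0) ^ 4, by ring⟩
    · exact ⟨Polynomial.C (X 1) ^ 4, by ring⟩
    · exact ⟨Polynomial.C (X 2) ^ 4, by ring⟩
    · exact ⟨(Polynomial.C (X 0) - Polynomial.C (X 1)) ^ 4, by ring⟩
    · exact ⟨(Polynomial.C (X 0) + Polynomial.C (X 1)) ^ 4, by ring⟩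
    · exact ⟨(Polynomial.C (X 0) - Polynomial.C (X 2)) ^ 4, by ring⟩
    · exact ⟨(Polynomial.C (X 0) + Polynomial.C (X 2)) ^ 4, by ring⟩
    · exact ⟨(Polynomial.C (X 1) - Polynomial.C (X 2)) ^ 4, by ring⟩
    · exact ⟨(Polynomial.C (X 1) + Polynomial.C (X 2)) ^ 4, by ring⟩
  exact hmap (Ideal.mem_map_of_mem _ hp)

/-- A quadric written as `C q' * t^2` under `subT` with `q' ≠ 0` is not in the ideal. -/
lemma not_mem_of_subT (q : MvPolynomial (Fin 3) ℂ) (q' : MvPolynomial (Fin 3) ℂ)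
    (hq' : q' ≠ 0) (h : subT q = Polynomial.C q' * Polynomial.X ^ 2) :
    q ∉ B3powersIdeal := by
  intro hmem
  have h4 := subT_mem_span q hmem
  rw [h, Ideal.mem_span_singleton] at h4
  rw [Polynomial.X_pow_dvd_iff] at h4
  have := h4 2 (by norm_num)
  simp [Polynomial.coeff_C_mul, Polynomial.coeff_X_pow] at this
  exact hq' this

set_option maxHeartbeats 1000000 in
/-- The ideal J generated by the nine fourth powers of the B₃ linear forms fails
the Strong Lefschetz Property in range 2 at degree 2: for every linear form
ℓ = ax + by + cz, the multiplication map ·ℓ² : (R/J)₂ → (R/J)₄ fails to be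
injective (both graded pieces have dimension 6), i.e. there is a homogeneous
quadric q with q ∉ J and ℓ²·q ∈ J. -/
theorem b3_powers_fail_SLP (a b c : ℂ) :
    ∃ q : MvPolynomial (Fin 3) ℂ, q.IsHomogeneous 2 ∧ q ∉ B3powersIdeal ∧
      (C a * X 0 + C b * X 1 + C c * X 2) ^ 2 * q ∈ B3powersIdeal := by
  have m1 : (X 0 : MvPolynomial (Fin 3) ℂ) ^ 4 ∈ B3powersIdeal :=
    Ideal.subset_span (Set.mem_insert _ _)
  have m2 : (X 1 : MvPolynomial (Fin 3) ℂ) ^ 4 ∈ B3powersIdeal :=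
    Ideal.subset_span (Set.mem_insert_of_mem _ (Set.mem_insert _ _))
  have m3 : (X 2 : MvPolynomial (Fin 3) ℂ) ^ 4 ∈ B3powersIdeal :=
    Ideal.subset_span (Set.mem_insert_of_mem _ (Set.mem_insert_of_mem _ (Set.mem_insert _ _)))
  have m4 : ((X 0 - X 1 : MvPolynomial (Fin 3) ℂ)) ^ 4 ∈ B3powersIdeal :=
    Ideal.subset_span (Set.mem_insert_of_mem _ (Set.mem_insert_of_mem _ (Set.mem_insert_of_mem _ (Set.mem_insert _ _))))
  have m5 : ((X 0 + X 1 : MvPolynomial (Fin 3) ℂ)) ^ 4 ∈ B3powersIdeal :=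
    Ideal.subset_span (Set.mem_insert_of_mem _ (Set.mem_insert_of_mem _ (Set.mem_insert_of_mem _ (Set.mem_insert_of_mem _ (Set.mem_insert _ _)))))
  have m6 : ((X 0 - X 2 : MvPolynomial (Fin 3) ℂ)) ^ 4 ∈ B3powersIdeal :=
    Ideal.subset_span (Set.mem_insert_of_mem _ (Set.mem_insert_of_mem _ (Set.mem_insert_of_mem _ (Set.mem_insert_of_mem _ (Set.mem_insert_of_mem _ (Set.mem_insert _ _))))))
  have m7 : ((X 0 + X 2 : MvPolynomial (Fin 3) ℂ)) ^ 4 ∈ B3powersIdeal :=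
    Ideal.subset_span (Set.mem_insert_of_mem _ (Set.mem_insert_of_mem _ (Set.mem_insert_of_mem _ (Set.mem_insert_of_mem _ (Set.mem_insert_of_mem _ (Set.mem_insert_of_mem _ (Set.mem_insert _ _)))))))
  have m8 : ((X 1 - X 2 : MvPolynomial (Fin 3) ℂ)) ^ 4 ∈ B3powersIdeal :=
    Ideal.subset_span (Set.mem_insert_of_mem _ (Set.mem_insert_of_mem _ (Set.mem_insert_of_mem _ (Set.mem_insert_of_mem _ (Set.mem_insert_of_mem _ (Set.mem_insert_of_mem _ (Set.mem_insert_of_mem _ (Set.mem_insert _ _))))))))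
  have m9 : ((X 1 + X 2 : MvPolynomial (Fin 3) ℂ)) ^ 4 ∈ B3powersIdeal :=
    Ideal.subset_span (Set.mem_insert_of_mem _ (Set.mem_insert_of_mem _ (Set.mem_insert_of_mem _ (Set.mem_insert_of_mem _ (Set.mem_insert_of_mem _ (Set.mem_insert_of_mem _ (Set.mem_insert_of_mem _ (Set.mem_insert_of_mem _ (Set.mem_singleton _)))))))))
  by_cases h0 : a = 0 ∧ b = 0 ∧ c = 0
  · obtain ⟨rfl, rfl, rfl⟩ := h0
    refine ⟨X 0 ^ 2, isHomogeneous_X_pow 0 2, ?_, ?_⟩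
    · refine not_mem_of_subT _ (X 0 ^ 2) (pow_ne_zero _ (X_ne_zero 0)) ?_
      simp only [subT, map_pow, aeval_X, map_mul]
      ring
    · have : (C (0:ℂ) * X 0 + C 0 * X 1 + C 0 * X 2) ^ 2 * X 0 ^ 2
          = (0 : MvPolynomial (Fin 3) ℂ) := by
        simp
      rw [this]
      exact Ideal.zero_mem _
  · refine ⟨C (2*a^2*(a^2-3*b^2-3*c^2)) * X 0 ^ 2 + C (2*b^2*(b^2-3*a^2-3*c^2)) * X 1 ^ 2
      + C (2*c^2*(c^2-3*a^2-3*b^2)) * X 2 ^ 2 + C (4*a*b*(3*c^2-a^2-b^2)) * (X 0 * X 1)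
      + C (4*a*c*(3*b^2-a^2-c^2)) * (X 0 * X 2) + C (4*b*c*(3*a^2-b^2-c^2)) * (X 1 * X 2),
      ?_, ?_, ?_⟩
    · refine ((((((isHomogeneous_C_mul_X_pow _ 0 2).add
        (isHomogeneous_C_mul_X_pow _ 1 2)).add
        (isHomogeneous_C_mul_X_pow _ 2 2)).add ?_).add ?_).add ?_) <;>
      · exact (isHomogeneous_C _ _).mul ((isHomogeneous_X _ _).mul (isHomogeneous_X _ _))
    · -- not in the ideal
      refine not_mem_of_subT _ (C (2*a^2*(a^2-3*b^2-3*c^2)) * X 0 ^ 2 + C (2*b^2*(b^2-3*a^2-3*c^2)) * X 1 ^ 2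
      + C (2*c^2*(c^2-3*a^2-3*b^2)) * X 2 ^ 2 + C (4*a*b*(3*c^2-a^2-b^2)) * (X 0 * X 1)
      + C (4*a*c*(3*b^2-a^2-c^2)) * (X 0 * X 2) + C (4*b*c*(3*a^2-b^2-c^2)) * (X 1 * X 2)) ?_ ?_
      · -- the quadric is nonzero
        intro hq
        have ev : ∀ v : Fin 3 → ℂ, (2*a^2*(a^2-3*b^2-3*c^2)) * (v 0)^2
            + (2*b^2*(b^2-3*a^2-3*c^2)) * (v 1)^2 + (2*c^2*(c^2-3*a^2-3*b^2)) * (v 2)^2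
            + (4*a*b*(3*c^2-a^2-b^2)) * (v 0 * v 1) + (4*a*c*(3*b^2-a^2-c^2)) * (v 0 * v 2)
            + (4*b*c*(3*a^2-b^2-c^2)) * (v 1 * v 2) = 0 := by
          intro v
          have h' := congrArg (eval v) hq
          simp only [map_add, map_mul, map_pow, eval_C, eval_X, map_zero] at h'
          linear_combination h'
        have eA := ev ![1,0,0]
        have eB := ev ![0,1,0]
        have eC := ev ![0,0,1]
        have eAB := ev ![1,1,0]
        have eAC := ev ![1,0,1]
        have eBC := ev ![0,1,1]
        simp only [Matrix.cons_val_zero, Matrix.cons_val_one, Matrix.head_cons,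
          Matrix.cons_val_two, Matrix.tail_cons] at eA eB eC eAB eAC eBC
        have hA : 2*a^2*(a^2-3*b^2-3*c^2) = 0 := by linear_combination eA
        have hB : 2*b^2*(b^2-3*a^2-3*c^2) = 0 := by linear_combination eB
        have hC : 2*c^2*(c^2-3*a^2-3*b^2) = 0 := by linear_combination eC
        have hE : 4*a*b*(3*c^2-a^2-b^2) = 0 := by linear_combination eAB - eA - eB
        have hF : 4*a*c*(3*b^2-a^2-c^2) = 0 := by linear_combination eAC - eA - eC
        have hG : 4*b*c*(3*a^2-b^2-c^2) = 0 := by linear_combination eBC - eB - eC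
        by_cases ha : a = 0
        · subst ha
          by_cases hb : b = 0
          · subst hb
            have hc : c ≠ 0 := fun hc => h0 ⟨rfl, rfl, hc⟩
            have h4 : c ^ 4 = 0 := by linear_combination hC / 2
            exact hc (pow_eq_zero_iff (by norm_num : 4 ≠ 0) |>.mp h4)
          · have h1 : b^2 - 3*(0:ℂ)^2 - 3*c^2 = 0 :=
              (mul_eq_zero.mp hB).resolve_left
                (mul_ne_zero two_ne_zero (pow_ne_zero _ hb))
            rcases mul_eq_zero.mp hG with h2 | h2
            · rcases mul_eq_zero.mp h2 with h3 | h3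
              · rcases mul_eq_zero.mp h3 with h4 | h4
                · norm_num at h4
                · exact hb h4
              · exact hb (pow_eq_zero_iff (by norm_num : 2 ≠ 0) |>.mp
                  (by linear_combination h1 + 3*c*h3))
            · have hc2 : c^2 = 0 := by linear_combination (-h1 - h2)/4
              exact hb (pow_eq_zero_iff (by norm_num : 2 ≠ 0) |>.mp
                (by linear_combination h1 + 3*hc2))
        · have h1 : a^2 - 3*b^2 - 3*c^2 = 0 :=
            (mul_eq_zero.mp hA).resolve_left
              (mul_ne_zero two_ne_zero (pow_ne_zero _ ha))
          by_cases hb : b = 0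
          · subst hb
            have hc : c ≠ 0 := by
              intro hc
              exact ha (pow_eq_zero_iff (by norm_num : 2 ≠ 0) |>.mp
                (by linear_combination h1 + 3*c*hc))
            have h2 : 3*(0:ℂ)^2 - a^2 - c^2 = 0 :=
              (mul_eq_zero.mp hF).resolve_left
                (mul_ne_zero (mul_ne_zero (by norm_num) ha) hc)
            exact hc (pow_eq_zero_iff (by norm_num : 2 ≠ 0) |>.mp
              (by linear_combination (-h1 - h2)/4))
          · have h2 : 3*c^2 - a^2 - b^2 = 0 :=
              (mul_eq_zero.mp hE).resolve_left
                (mul_ne_zero (mul_ne_zero (by norm_num) ha) hb)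
            exact hb (pow_eq_zero_iff (by norm_num : 2 ≠ 0) |>.mp
              (by linear_combination (-h1 - h2)/4))
      · -- image under subT
        simp only [subT, map_add, map_mul, map_pow, aeval_X, aeval_C,
          Polynomial.algebraMap_apply, MvPolynomial.algebraMap_eq]
        ring
    · -- the product is in the ideal
      have key : (C a * X 0 + C b * X 1 + C c * X 2 : MvPolynomial (Fin 3) ℂ) ^ 2 *
          (C (2*a^2*(a^2-3*b^2-3*c^2)) * X 0 ^ 2 + C (2*b^2*(b^2-3*a^2-3*c^2)) * X 1 ^ 2
          + C (2*c^2*(c^2-3*a^2-3*b^2)) * X 2 ^ 2 + C (4*a*b*(3*c^2-a^2-b^2)) * (X 0 * X 1)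
          + C (4*a*c*(3*b^2-a^2-c^2)) * (X 0 * X 2) + C (4*b*c*(3*a^2-b^2-c^2)) * (X 1 * X 2))
          = C (2*a^2*(a^4+b^4+c^4-2*a^2*b^2-2*b^2*c^2-2*a^2*c^2)) * X 0 ^ 4
          + C (2*b^2*(a^4+b^4+c^4-2*a^2*b^2-2*b^2*c^2-2*a^2*c^2)) * X 1 ^ 4
          + C (2*c^2*(a^4+b^4+c^4-2*a^2*b^2-2*b^2*c^2-2*a^2*c^2)) * X 2 ^ 4
          + C (-(a^2*b^2*((a-b)^2-c^2))) * (X 0 - X 1) ^ 4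
          + C (-(a^2*b^2*((a+b)^2-c^2))) * (X 0 + X 1) ^ 4
          + C (-(a^2*c^2*((a-c)^2-b^2))) * (X 0 - X 2) ^ 4
          + C (-(a^2*c^2*((a+c)^2-b^2))) * (X 0 + X 2) ^ 4
          + C (-(b^2*c^2*((b-c)^2-a^2))) * (X 1 - X 2) ^ 4
          + C (-(b^2*c^2*((b+c)^2-a^2))) * (X 1 + X 2) ^ 4 := by
        simp only [map_mul, map_add, map_sub, map_pow, map_neg, map_ofNat]
        ring
      have hmem : (C (2*a^2*(a^4+b^4+c^4-2*a^2*b^2-2*b^2*c^2-2*a^2*c^2)) * X 0 ^ 4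
          + C (2*b^2*(a^4+b^4+c^4-2*a^2*b^2-2*b^2*c^2-2*a^2*c^2)) * X 1 ^ 4
          + C (2*c^2*(a^4+b^4+c^4-2*a^2*b^2-2*b^2*c^2-2*a^2*c^2)) * X 2 ^ 4
          + C (-(a^2*b^2*((a-b)^2-c^2))) * (X 0 - X 1) ^ 4
          + C (-(a^2*b^2*((a+b)^2-c^2))) * (X 0 + X 1) ^ 4
          + C (-(a^2*c^2*((a-c)^2-b^2))) * (X 0 - X 2) ^ 4
          + C (-(a^2*c^2*((a+c)^2-b^2))) * (X 0 + X 2) ^ 4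
          + C (-(b^2*c^2*((b-c)^2-a^2))) * (X 1 - X 2) ^ 4
          + C (-(b^2*c^2*((b+c)^2-a^2))) * (X 1 + X 2) ^ 4) ∈ B3powersIdeal := Ideal.add_mem _ (Ideal.add_mem _ (Ideal.add_mem _ (Ideal.add_mem _ (Ideal.add_mem _
        (Ideal.add_mem _ (Ideal.add_mem _ (Ideal.add_mem _
        (Ideal.mul_mem_left _ _ m1) (Ideal.mul_mem_left _ _ m2)) (Ideal.mul_mem_left _ _ m3))
        (Ideal.mul_mem_left _ _ m4)) (Ideal.mul_mem_left _ _ m5)) (Ideal.mul_mem_left _ _ m6))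
        (Ideal.mul_mem_left _ _ m7)) (Ideal.mul_mem_left _ _ m8)) (Ideal.mul_mem_left _ _ m9)
      exact Eq.mpr (congrArg (· ∈ B3powersIdeal) key) hmem
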